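/- Let Q be a probability distribution on a finite set of size K and Q̂ the empirical distribution of α i.i.d. samples from Q. Then for any ε > 0, P(‖Q̂ − Q‖₁ > ε) ≤ 2^K · exp(−α·ε²/2). -/

import Mathlib

open MeasureTheory ProbabilityTheory Real Classical


/-- Hoeffding's lemma core: two-point mgf bound. -/
lemma hoeffding_core (p : ℝ) (hp0 : 0 ≤ p) (hp1 : p ≤ 1) (u : ℝ) :
    1 - p + p * Real.exp u ≤ Real.exp (p * u + u ^ 2 / 8) := by
  rcases eq_or_lt_of_le hp0 with h0 | h0
  · simp only [← h0, sub_zero, zero_mul, add_zero, zero_add]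
    calc (1:ℝ) = Real.exp 0 := by simp
    _ ≤ _ := by apply Real.exp_le_exp.2; positivity
  rcases eq_or_lt_of_le hp1 with h1 | h1
  · subst h1
    simp only [sub_self, zero_add, one_mul]
    apply Real.exp_le_exp.2; nlinarith [sq_nonneg u]
  -- now 0 < p < 1
  set D : ℝ → ℝ := fun u => 1 - p + p * Real.exp u with hD
  have hDpos : ∀ x, 0 < D x := fun x => by
    have := Real.exp_pos x; simp only [hD]; nlinarith
  set F : ℝ → ℝ := fun u => p * u + u ^ 2 / 8 - Real.log (D u) with hF
  set G : ℝ → ℝ := fun u => p + u / 4 - p * Real.exp u / D u with hG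
  have hD' : ∀ x, HasDerivAt D (p * Real.exp x) x := fun x =>
    ((Real.hasDerivAt_exp x).const_mul p).const_add (1 - p)
  have hF' : ∀ x, HasDerivAt F (G x) x := by
    intro x
    have h1 : HasDerivAt (fun u : ℝ => p * u + u ^ 2 / 8) (p + 2 * x / 8) x := by
      have := ((hasDerivAt_pow 2 x).div_const 8).const_add (0:ℝ)
      have h2 : HasDerivAt (fun u : ℝ => p * u) p x := by
        simpa using (hasDerivAt_id x).const_mul p
      exact (h2.add ((hasDerivAt_pow 2 x).div_const 8)).congr_deriv (by norm_num)
    have h2 : HasDerivAt (fun u => Real.log (D u)) (p * Real.exp x / D x) x :=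
      (hD' x).log (hDpos x).ne'
    have := h1.sub h2
    exact this.congr_deriv (by simp only [hG]; ring)
  have hG' : ∀ x, HasDerivAt G (1 / 4 - (p * Real.exp x * D x - p * Real.exp x * (p * Real.exp x)) / (D x) ^ 2) x := by
    intro x
    have hq : HasDerivAt (fun u => p * Real.exp u / D u)
        ((p * Real.exp x * D x - p * Real.exp x * (p * Real.exp x)) / (D x) ^ 2) x :=
      ((Real.hasDerivAt_exp x).const_mul p).div (hD' x) (hDpos x).ne'
    have h1 : HasDerivAt (fun u : ℝ => p + u / 4) (1 / 4) x := by
      simpa using ((hasDerivAt_id x).div_const 4).const_add p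
    exact h1.sub hq
  have hGmono : Monotone G := by
    apply monotone_of_deriv_nonneg (fun x => (hG' x).differentiableAt)
    intro x
    rw [(hG' x).deriv]
    have he := Real.exp_pos x
    have hDx := hDpos x
    rw [sub_nonneg, div_le_iff₀ (by positivity)]
    have key : p * Real.exp x * D x - p * Real.exp x * (p * Real.exp x)
        = p * Real.exp x * (1 - p) := by simp only [hD]; ring
    rw [key]
    have : (D x) ^ 2 - 4 * (p * Real.exp x * (1 - p)) = (1 - p - p * Real.exp x) ^ 2 := by
      simp only [hD]; ring
    nlinarith [sq_nonneg (1 - p - p * Real.exp x)]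
  have hG0 : G 0 = 0 := by simp [hG, hD]
  have hF0 : F 0 = 0 := by simp [hF, hD]
  have hFnonneg : 0 ≤ F u := by
    rcases le_or_gt 0 u with hu | hu
    · have hmono : MonotoneOn F (Set.Ici (0:ℝ)) := by
        apply monotoneOn_of_deriv_nonneg (convex_Ici 0)
          (Continuous.continuousOn (by
            fun_prop (disch := intro x; exact (hDpos x).ne')))
          (fun x _ => (hF' x).differentiableAt.differentiableWithinAt)
        intro x hx
        rw [(hF' x).deriv]
        rw [interior_Ici] at hx
        calc (0:ℝ) = G 0 := hG0.symm
        _ ≤ G x := hGmono (le_of_lt hx)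
      have := hmono (Set.self_mem_Ici) (Set.mem_Ici.2 hu) hu
      rwa [hF0] at this
    · have hmono : AntitoneOn F (Set.Iic (0:ℝ)) := by
        apply antitoneOn_of_deriv_nonpos (convex_Iic 0)
          (Continuous.continuousOn (by
            fun_prop (disch := intro x; exact (hDpos x).ne')))
          (fun x _ => (hF' x).differentiableAt.differentiableWithinAt)
        intro x hx
        rw [(hF' x).deriv]
        rw [interior_Iic] at hx
        calc G x ≤ G 0 := hGmono (le_of_lt hx)
        _ = 0 := hG0
      have := hmono (Set.mem_Iic.2 hu.le) (Set.self_mem_Iic) hu.le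
      rwa [hF0] at this
  have : Real.log (D u) ≤ p * u + u ^ 2 / 8 := by
    simp only [hF] at hFnonneg; linarith
  calc D u = Real.exp (Real.log (D u)) := (Real.exp_log (hDpos u)).symm
  _ ≤ _ := Real.exp_le_exp.2 this


lemma weissman_per_sign {Ω S : Type*} [MeasurableSpace Ω] [Fintype S]
    [MeasurableSpace S] [MeasurableSingletonClass S]
    (μ : Measure Ω) [IsProbabilityMeasure μ]
    (Q : Measure S) [IsProbabilityMeasure Q]
    (α : ℕ) (hα : 0 < α) (Y : Fin α → Ω → S)
    (hmeas : ∀ i, Measurable (Y i))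
    (hindep : iIndepFun Y μ)
    (hlaw : ∀ i, Measure.map (Y i) μ = Q)
    (ε : ℝ) (hε : 0 < ε) (g : S → ℝ) (hg : ∀ s, g s = 1 ∨ g s = -1) :
    μ {ω | ε < ∑ s : S,
        g s * (((Finset.univ.filter fun i => Y i ω = s).card : ℝ) / α - (Q {s}).toReal)}
      ≤ ENNReal.ofReal (Real.exp (-α * ε ^ 2 / 2)) := by
  classical
  set q : S → ℝ := fun s => (Q {s}).toReal with hq
  have hq_nonneg : ∀ s, 0 ≤ q s := fun s => ENNReal.toReal_nonneg
  have hq_sum : ∑ s, q s = 1 := by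
    have h1 := integral_fintype (μ := Q) (f := fun _ : S => (1:ℝ)) (integrable_const 1)
    simp only [integral_const, measure_univ, ENNReal.toReal_one, smul_eq_mul, mul_one,
      one_smul, measureReal_def] at h1
    exact h1.symm
  set X : Fin α → Ω → ℝ := fun i ω => g (Y i ω) with hX
  set m : ℝ := ∑ s, g s * q s with hm
  have hαR : (0:ℝ) < (α : ℝ) := by exact_mod_cast hα
  -- pointwise identity
  have hpoint : ∀ ω, ∑ s : S,
      g s * (((Finset.univ.filter fun i => Y i ω = s).card : ℝ) / α - q s)
      = (∑ i, X i ω) / α - m := by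
    intro ω
    have hfib : ∑ i, X i ω
        = ∑ s : S, ((Finset.univ.filter fun i => Y i ω = s).card : ℝ) * g s := by
      rw [← Finset.sum_fiberwise Finset.univ (fun i => Y i ω) (fun i => X i ω)]
      refine Finset.sum_congr rfl fun s _ => ?_
      rw [Finset.sum_congr rfl (fun i hi => ?_), Finset.sum_const, nsmul_eq_mul]
      · simp only [Finset.mem_filter] at hi
        simp [hX, hi.2]
    rw [hfib, Finset.sum_div, hm, ← Finset.sum_sub_distrib]
    refine Finset.sum_congr rfl fun s _ => ?_
    ring
  -- measurability, independence, integrability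
  have hgmeas : Measurable g := measurable_of_countable g
  have hXmeas : ∀ i, Measurable (X i) := fun i => hgmeas.comp (hmeas i)
  have hXindep : iIndepFun X μ :=
    hindep.comp (fun _ => g) (fun _ => hgmeas)
  have hXbound : ∀ i ω, |X i ω| ≤ 1 := by
    intro i ω; rcases hg (Y i ω) with h | h <;> simp [hX, h]
  have h_int : ∀ i, Integrable (fun ω => Real.exp (ε * X i ω)) μ := by
    intro i
    refine Integrable.mono' (integrable_const (Real.exp ε))
      (((hXmeas i).const_mul ε).exp.aestronglyMeasurable) (ae_of_all _ fun ω => ?_)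
    rw [Real.norm_eq_abs, Real.abs_exp]
    apply Real.exp_le_exp.2
    have := hXbound i ω
    nlinarith [abs_nonneg (X i ω), le_abs_self (X i ω)]
  -- Chernoff
  have hchern := measure_ge_le_exp_mul_mgf (μ := μ) (X := ∑ i, X i)
    ((α : ℝ) * (ε + m)) hε.le
    (hXindep.integrable_exp_mul_sum hXmeas (fun i _ => h_int i))
  -- compute mgf of each X i
  have hmgf_i : ∀ i, mgf (X i) μ ε = ∑ s, q s * Real.exp (ε * g s) := by
    intro i
    have h1 : mgf (X i) μ ε = ∫ ω, Real.exp (ε * g (Y i ω)) ∂μ := rfl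
    rw [h1, ← integral_map (hmeas i).aemeasurable
      (measurable_of_countable (fun s => Real.exp (ε * g s))).aestronglyMeasurable, hlaw i,
      integral_fintype (Integrable.of_finite)]
    simp [smul_eq_mul, hq, measureReal_def]
  -- the fraction p of +1 signs
  set A : Finset S := Finset.univ.filter (fun s => g s = 1) with hA
  set pA : ℝ := ∑ s ∈ A, q s with hpA
  have hpA0 : 0 ≤ pA := Finset.sum_nonneg fun s _ => hq_nonneg s
  have hsplit : ∀ f : ℝ → ℝ, ∑ s, q s * f (g s)
      = pA * f 1 + (1 - pA) * f (-1) := by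
    intro f
    rw [← Finset.sum_filter_add_sum_filter_not Finset.univ (fun s => g s = 1)]
    have h1 : ∑ s ∈ Finset.univ.filter (fun s => g s = 1), q s * f (g s) = pA * f 1 := by
      rw [hpA, Finset.sum_mul]
      refine Finset.sum_congr rfl fun s hs => ?_
      simp only [hA, Finset.mem_filter] at hs
      rw [hs.2]
    have h2 : ∑ s ∈ Finset.univ.filter (fun s => ¬ g s = 1), q s * f (g s)
        = (1 - pA) * f (-1) := by
      have hc : ∑ s ∈ Finset.univ.filter (fun s => ¬ g s = 1), q s = 1 - pA := by
        have := Finset.sum_filter_add_sum_filter_not Finset.univ (fun s => g s = 1) q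
        rw [hq_sum] at this
        linarith [this]
      rw [← hc, Finset.sum_mul]
      refine Finset.sum_congr rfl fun s hs => ?_
      simp only [Finset.mem_filter] at hs
      rcases hg s with h | h
      · exact absurd h hs.2
      · rw [h]
    rw [h1, h2]
  have hpA1 : pA ≤ 1 := by
    have := Finset.sum_filter_add_sum_filter_not Finset.univ (fun s => g s = 1) q
    rw [hq_sum] at this
    have h2 : 0 ≤ ∑ s ∈ Finset.univ.filter (fun s => ¬ g s = 1), q s :=
      Finset.sum_nonneg fun s _ => hq_nonneg s
    rw [hpA, hA]; linarith
  have hm_eq : m = 2 * pA - 1 := by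
    have := hsplit id
    simp only [id] at this
    rw [hm]
    have : ∑ s, g s * q s = pA * 1 + (1 - pA) * (-1) := by
      rw [← this]; exact Finset.sum_congr rfl fun s _ => mul_comm _ _
    rw [this]; ring
  -- per-factor bound
  have hfactor : ∑ s, q s * Real.exp (ε * g s)
      ≤ Real.exp (ε * m + ε ^ 2 / 2) := by
    rw [hsplit (fun x => Real.exp (ε * x))]
    have hcore := hoeffding_core pA hpA0 hpA1 (2 * ε)
    have hkey := mul_le_mul_of_nonneg_left hcore (Real.exp_pos (-ε)).le
    calc pA * Real.exp (ε * 1) + (1 - pA) * Real.exp (ε * (-1))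
        = Real.exp (-ε) * (1 - pA + pA * Real.exp (2 * ε)) := by
          rw [mul_add, mul_comm (Real.exp (-ε)) (pA * Real.exp (2*ε)), mul_assoc,
            ← Real.exp_add]
          ring_nf
      _ ≤ Real.exp (-ε) * Real.exp (pA * (2 * ε) + (2 * ε) ^ 2 / 8) := hkey
      _ = Real.exp (ε * m + ε ^ 2 / 2) := by
          rw [← Real.exp_add, hm_eq]; ring_nf
  have hfac_nonneg : 0 ≤ ∑ s, q s * Real.exp (ε * g s) :=
    Finset.sum_nonneg fun s _ => mul_nonneg (hq_nonneg s) (Real.exp_pos _).le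
  -- mgf of sum
  have hmgf_sum : mgf (∑ i, X i) μ ε ≤ Real.exp ((α : ℝ) * (ε * m + ε ^ 2 / 2)) := by
    rw [hXindep.mgf_sum hXmeas Finset.univ]
    calc ∏ i, mgf (X i) μ ε = (∑ s, q s * Real.exp (ε * g s)) ^ α := by
          rw [Finset.prod_congr rfl (fun i _ => hmgf_i i), Finset.prod_const,
            Finset.card_univ, Fintype.card_fin]
      _ ≤ (Real.exp (ε * m + ε ^ 2 / 2)) ^ α := by
          exact pow_le_pow_left₀ hfac_nonneg hfactor α
      _ = Real.exp ((α : ℝ) * (ε * m + ε ^ 2 / 2)) := by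
          rw [← Real.exp_nat_mul]
  -- combine
  have hfinal : (μ {ω | (α : ℝ) * (ε + m) ≤ (∑ i, X i) ω}).toReal
      ≤ Real.exp (-α * ε ^ 2 / 2) := by
    refine hchern.trans ?_
    calc Real.exp (-ε * ((α:ℝ) * (ε + m))) * mgf (∑ i, X i) μ ε
        ≤ Real.exp (-ε * ((α:ℝ) * (ε + m))) * Real.exp ((α : ℝ) * (ε * m + ε ^ 2 / 2)) :=
          mul_le_mul_of_nonneg_left hmgf_sum (Real.exp_pos _).le
      _ = Real.exp (-α * ε ^ 2 / 2) := by rw [← Real.exp_add]; ring_nf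
  have hsub : {ω | ε < ∑ s : S,
      g s * (((Finset.univ.filter fun i => Y i ω = s).card : ℝ) / α - (Q {s}).toReal)}
      ⊆ {ω | (α : ℝ) * (ε + m) ≤ (∑ i, X i) ω} := by
    intro ω hω
    simp only [Set.mem_setOf_eq] at hω ⊢
    rw [hpoint ω] at hω
    rw [Finset.sum_apply]
    have : (α : ℝ) * (ε + m) < ∑ i, X i ω := by
      rw [← lt_div_iff₀' hαR]
      have : ε + m < (∑ i, X i ω) / α := by
        have h2 : ε < (∑ i, X i ω) / α - m := hω
        linarith
      calc (ε + m) = (ε + m) := rfl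
      _ < (∑ i, X i ω) / ↑α := this
      _ = (∑ i, X i ω) / ↑α := rfl
    exact this.le
  calc μ _ ≤ μ {ω | (α : ℝ) * (ε + m) ≤ (∑ i, X i) ω} := measure_mono hsub
    _ ≤ ENNReal.ofReal (Real.exp (-α * ε ^ 2 / 2)) := by
        rw [ENNReal.le_ofReal_iff_toReal_le (measure_ne_top μ _) (Real.exp_pos _).le]
        exact hfinal

/-- Weissman et al. concentration inequality: for the empirical distribution `Q̂` of
`α` i.i.d. samples from a distribution `Q` on a finite set of size `K`,
`P(‖Q̂ − Q‖₁ > ε) ≤ 2^K · exp(−α ε² / 2)`. -/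
theorem glove_weissman {Ω S : Type*} [MeasurableSpace Ω] [Fintype S]
    [MeasurableSpace S] [MeasurableSingletonClass S]
    (μ : Measure Ω) [IsProbabilityMeasure μ]
    (K : ℕ) (hK : Fintype.card S = K)
    (Q : Measure S) [IsProbabilityMeasure Q]
    (α : ℕ) (hα : 0 < α) (Y : Fin α → Ω → S)
    (hmeas : ∀ i, Measurable (Y i))
    (hindep : iIndepFun Y μ)
    (hlaw : ∀ i, Measure.map (Y i) μ = Q)
    (ε : ℝ) (hε : 0 < ε) :
    μ {ω | ε < ∑ s : S,
        |((Finset.univ.filter fun i => Y i ω = s).card : ℝ) / α - (Q {s}).toReal|} ≤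
      ENNReal.ofReal ((2 : ℝ) ^ K * Real.exp (-α * ε ^ 2 / 2)) := by
  classical
  set x : Ω → S → ℝ := fun ω s =>
    ((Finset.univ.filter fun i => Y i ω = s).card : ℝ) / α - (Q {s}).toReal with hx
  set g : (S → Bool) → S → ℝ := fun φ s => if φ s then 1 else -1 with hg
  have hsub : {ω | ε < ∑ s : S, |x ω s|}
      ⊆ ⋃ φ : S → Bool, {ω | ε < ∑ s : S, g φ s * x ω s} := by
    intro ω hω
    refine Set.mem_iUnion.2 ⟨fun s => decide (0 ≤ x ω s), ?_⟩
    simp only [Set.mem_setOf_eq] at hω ⊢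
    have : ∀ s, |x ω s| = g (fun s => decide (0 ≤ x ω s)) s * x ω s := by
      intro s
      simp only [hg]
      rcases le_or_gt 0 (x ω s) with h | h
      · simp [h, abs_of_nonneg h]
      · simp [not_le.2 h, abs_of_neg h]
    rwa [Finset.sum_congr rfl (fun s _ => this s)] at hω
  calc μ {ω | ε < ∑ s : S, |x ω s|}
      ≤ μ (⋃ φ : S → Bool, {ω | ε < ∑ s : S, g φ s * x ω s}) := measure_mono hsub
    _ ≤ ∑' φ : S → Bool, μ {ω | ε < ∑ s : S, g φ s * x ω s} := measure_iUnion_le _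
    _ = ∑ φ : S → Bool, μ {ω | ε < ∑ s : S, g φ s * x ω s} := tsum_fintype _
    _ ≤ ∑ _φ : S → Bool, ENNReal.ofReal (Real.exp (-α * ε ^ 2 / 2)) := by
        refine Finset.sum_le_sum fun φ _ => ?_
        exact weissman_per_sign μ Q α hα Y hmeas hindep hlaw ε hε (g φ)
          (fun s => by rcases Bool.eq_false_or_eq_true (φ s) with h | h <;> simp [hg, h])
    _ = ENNReal.ofReal ((2 : ℝ) ^ K * Real.exp (-α * ε ^ 2 / 2)) := by
        rw [Finset.sum_const, Finset.card_univ, Fintype.card_fun, Fintype.card_bool, hK,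
          nsmul_eq_mul, ENNReal.ofReal_mul (by positivity)]
        congr 1
        rw [show ((2:ℝ)^K) = ((2^K : ℕ) : ℝ) by push_cast; ring,
          ENNReal.ofReal_natCast, Nat.cast_pow]
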